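/- arXiv:1912.12588 — 3 statements merged into one kernel-verified Lean document; each statement's English description precedes it below -/
import Mathlib

section
/- Let n be a natural number, let q, p : Fin n → ℂ with p injective, and define the n×n complex matrices D = diag(q_1,…,q_n) and A with A i i = 0 and A i j = i/(p i − p j) for i ≠ j, where i is the imaginary unit. Then 2·trace(D²A²) + trace(D·A·D·A) = 2 Σ_{i<j} ((q i)² + (q i)(q j) + (q j)²)/(p i − p j)². -/
/-!
Both traces are double sums of `(A i j) (A j i)` weighted by `2 q i ² + q i q j`, and
`(A i j) (A j i) = 1 / (p i − p j)²` is symmetric with vanishing diagonal, so folding the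
double sum onto the pairs `i < j` symmetrises the weights to `2 (q i ² + q i q j + q j ²)`.
-/

open Matrix Finset

namespace Matrix

variable {ι R : Type*} [Fintype ι] [DecidableEq ι] [CommSemiring R]

theorem trace_diagonal_mul_mul_diagonal_mul (d e : ι → R) (A : Matrix ι ι R) :
    trace (diagonal d * A * diagonal e * A) = ∑ i, ∑ j, d i * e j * (A i j * A j i) := by
  simp only [trace, Matrix.diag_apply, mul_apply (M := diagonal d * A * diagonal e), mul_diagonal,
    diagonal_mul]
  exact sum_congr rfl fun i _ => sum_congr rfl fun j _ => by ring

theorem trace_diagonal_mul_sq (d : ι → R) (A : Matrix ι ι R) :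
    trace (diagonal d * A ^ 2) = ∑ i, ∑ j, d i * (A i j * A j i) := by
  simp only [trace, Matrix.diag_apply, diagonal_mul, sq, mul_apply (M := A), mul_sum]

end Matrix

theorem Finset.sum_sum_eq_sum_sum_lt_add_swap {ι M : Type*} [Fintype ι] [LinearOrder ι]
    [AddCommMonoid M] (f : ι → ι → M) (hf : ∀ i, f i i = 0) :
    ∑ i, ∑ j, f i j = ∑ i, ∑ j, if i < j then f i j + f j i else 0 := by
  have split (i j : ι) : f i j = (if i < j then f i j else 0) + (if j < i then f i j else 0) := by
    rcases lt_trichotomy i j with h | rfl | h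
    · simp [h, h.not_gt]
    · simp [hf]
    · simp [h, h.not_gt]
  calc ∑ i, ∑ j, f i j
      = ∑ i, ∑ j, (if i < j then f i j else 0) + ∑ i, ∑ j, (if j < i then f i j else 0) := by
        simp only [← sum_add_distrib, ← split]
    _ = ∑ i, ∑ j, (if i < j then f i j else 0) + ∑ i, ∑ j, (if i < j then f j i else 0) := by
        rw [sum_comm (f := fun i j => if j < i then f i j else 0)]
    _ = ∑ i, ∑ j, if i < j then f i j + f j i else 0 := by
        simp only [← sum_add_distrib, ← ite_add_zero]

theorem Complex.I_div_sub_mul_I_div_sub_swap (a b : ℂ) :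
    Complex.I / (a - b) * (Complex.I / (b - a)) = 1 / (a - b) ^ 2 := by
  rw [div_mul_div_comm, Complex.I_mul_I, ← neg_div_neg_eq]
  ring

theorem interaction_term_g_squared_general (n : ℕ) (q p : Fin n → ℂ) :
    2 * Matrix.trace ((Matrix.diagonal q) ^ 2 *
          (Matrix.of fun i j : Fin n => if i = j then 0 else Complex.I / (p i - p j)) ^ 2)
      + Matrix.trace (Matrix.diagonal q *
          (Matrix.of fun i j : Fin n => if i = j then 0 else Complex.I / (p i - p j)) *
          Matrix.diagonal q *
          (Matrix.of fun i j : Fin n => if i = j then 0 else Complex.I / (p i - p j)))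
      = 2 * ∑ i, ∑ j, if i < j then
          ((q i) ^ 2 + q i * q j + (q j) ^ 2) / (p i - p j) ^ 2 else 0 := by
  set A : Matrix (Fin n) (Fin n) ℂ :=
    Matrix.of fun i j : Fin n => if i = j then 0 else Complex.I / (p i - p j)
  have hA_pair {i j : Fin n} (h : i ≠ j) : A i j * A j i = 1 / (p i - p j) ^ 2 := by
    simp only [A, of_apply, h, h.symm, if_false, Complex.I_div_sub_mul_I_div_sub_swap]
  rw [diagonal_pow, trace_diagonal_mul_sq, trace_diagonal_mul_mul_diagonal_mul]
  simp only [mul_sum, ← sum_add_distrib]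
  rw [sum_sum_eq_sum_sum_lt_add_swap _ fun i => by simp [A]]
  refine sum_congr rfl fun i _ => sum_congr rfl fun j _ => ?_
  split_ifs with h
  · rw [mul_comm (A j i), hA_pair h.ne, Pi.pow_apply, Pi.pow_apply]
    ring
  · rw [mul_zero]

/-- The `g²`-interaction term of the dual Calogero–Painlevé II Hamiltonian:
for `D = diag(q)` and `A` with zero diagonal and off-diagonal entries `I/(p i − p j)`,
`2 Tr(D²A²) + Tr(DADA) = 2 Σ_{i<j} (q i² + q i q j + q j²)/(p i − p j)²`. -/
theorem interaction_term_g_squared (n : ℕ) (q p : Fin n → ℂ) (hp : Function.Injective p) :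
    2 * Matrix.trace ((Matrix.diagonal q) ^ 2 *
          (Matrix.of fun i j : Fin n => if i = j then 0 else Complex.I / (p i - p j)) ^ 2)
      + Matrix.trace (Matrix.diagonal q *
          (Matrix.of fun i j : Fin n => if i = j then 0 else Complex.I / (p i - p j)) *
          Matrix.diagonal q *
          (Matrix.of fun i j : Fin n => if i = j then 0 else Complex.I / (p i - p j)))
      = 2 * ∑ i, ∑ j, if i < j then
          ((q i) ^ 2 + q i * q j + (q j) ^ 2) / (p i - p j) ^ 2 else 0 :=
  interaction_term_g_squared_general n q p
end

section
/- Let n be a natural number, let q, p : Fin n → ℂ with q injective, let g, ω ∈ ℂ, let Q = diag(q_1,…,q_n) and let P be the n×n matrix with P i i = p i and P i j = i·g/(q i − q j) for i ≠ j (i the imaginary unit). Then trace(P²/2 + ω²·Q²/2) = Σ_i ((p i)²/2 + ω²(q i)²/2) + Σ_{i<j} g²/(q i − q j)². -/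
/-!
The diagonal entries of `P²` are `p i ^ 2 + ∑_{j ≠ i} P i j * P j i`, and for `i ≠ j`
`P i j * P j i = (I g)² / ((q i - q j) (q j - q i)) = g² / (q i - q j)²`. This off-diagonal
sum is symmetric in `(i, j)`, so it counts every pair `i < j` twice, which cancels the `1/2`.
-/

open Matrix

theorem Finset.sum_sum_eq_sum_diag_add_two_nsmul_sum_lt {ι M : Type*} [Fintype ι] [LinearOrder ι]
    [AddCommMonoid M] (f : ι → ι → M)
    (hf : ∀ i j, f i j = f j i) :
    ∑ i, ∑ j, f i j = ∑ i, f i i + 2 • ∑ i, ∑ j, if i < j then f i j else 0 := by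
  have hsplit : ∀ i j, f i j = (if i = j then f i j else 0)
      + ((if i < j then f i j else 0) + (if j < i then f j i else 0)) := by
    intro i j
    rcases lt_trichotomy i j with h | rfl | h
    · simp [h.ne, h, h.asymm]
    · simp
    · simp [h.ne', h, h.asymm, hf i j]
  have hswap : (∑ i, ∑ j, if j < i then f j i else 0)
      = ∑ i, ∑ j, if i < j then f i j else 0 :=
    Finset.sum_comm
  calc ∑ i, ∑ j, f i j
      = ∑ i, ∑ j, ((if i = j then f i j else 0)
          + ((if i < j then f i j else 0) + (if j < i then f j i else 0))) :=
        Finset.sum_congr rfl fun i _ => Finset.sum_congr rfl fun j _ => hsplit i j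
    _ = ∑ i, f i i + 2 • ∑ i, ∑ j, if i < j then f i j else 0 := by
        simp only [Finset.sum_add_distrib, Finset.sum_ite_eq, Finset.mem_univ, if_true, hswap,
          two_nsmul]

theorem Matrix.trace_mul_self_eq_sum_sum {ι R : Type*} [Fintype ι] [NonUnitalNonAssocSemiring R]
    (A : Matrix ι ι R) : trace (A * A) = ∑ i, ∑ j, A i j * A j i := by
  simp [trace, mul_apply]

theorem div_sub_mul_div_sub_swap {K : Type*} [Field K] (c a b : K) :
    c / (a - b) * (c / (b - a)) = -(c ^ 2 / (a - b) ^ 2) := by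
  rw [div_mul_div_comm, ← neg_sub a b, mul_neg, div_neg, sq, sq]

section Calogero

variable {ι : Type*} [DecidableEq ι]

noncomputable def calogeroLax (q p : ι → ℂ) (g : ℂ) : Matrix ι ι ℂ :=
  Matrix.of fun i j => if i = j then p i else Complex.I * g / (q i - q j)

theorem calogeroLax_mul_calogeroLax_swap (q p : ι → ℂ) (g : ℂ) (i j : ι) :
    calogeroLax q p g i j * calogeroLax q p g j i
      = if i = j then p i ^ 2 else g ^ 2 / (q i - q j) ^ 2 := by
  by_cases h : i = j
  · subst h
    simp [calogeroLax, sq]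
  · simp only [calogeroLax, of_apply, h, Ne.symm h, if_false, div_sub_mul_div_sub_swap, mul_pow,
      Complex.I_sq]
    ring

theorem trace_calogeroLax_sq [Fintype ι] [LinearOrder ι] (q p : ι → ℂ) (g : ℂ) :
    trace (calogeroLax q p g ^ 2)
      = ∑ i, p i ^ 2 + 2 * ∑ i, ∑ j, if i < j then g ^ 2 / (q i - q j) ^ 2 else 0 := by
  rw [sq, trace_mul_self_eq_sum_sum,
    Finset.sum_sum_eq_sum_diag_add_two_nsmul_sum_lt _ fun _ _ => mul_comm _ _,
    two_nsmul, two_mul]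
  simp +contextual only [calogeroLax_mul_calogeroLax_swap, if_true, ne_of_lt, if_false]

end Calogero

theorem trace_harmonic_oscillator_reduced_general (n : ℕ) (q p : Fin n → ℂ)
    (g ω : ℂ) :
    Matrix.trace ((1 / 2 : ℂ) •
        (Matrix.of fun i j : Fin n =>
          if i = j then p i else Complex.I * g / (q i - q j)) ^ 2
      + (ω ^ 2 / 2) • (Matrix.diagonal q) ^ 2)
      = (∑ i, ((p i) ^ 2 / 2 + ω ^ 2 * (q i) ^ 2 / 2))
        + ∑ i, ∑ j, if i < j then g ^ 2 / (q i - q j) ^ 2 else 0 := by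
  change trace ((1 / 2 : ℂ) • calogeroLax q p g ^ 2 + (ω ^ 2 / 2) • diagonal q ^ 2) = _
  rw [trace_add, trace_smul, trace_smul, trace_calogeroLax_sq, diagonal_pow, trace_diagonal,
    Finset.sum_add_distrib, ← Finset.sum_div, ← Finset.sum_div, ← Finset.mul_sum]
  simp only [smul_eq_mul, Pi.pow_apply]
  ring

/-- Reduced matrix harmonic oscillator Hamiltonian `Tr(P²/2 + ω²Q²/2)` with `Q = diag(q)`
and `P` the rational Calogero Lax matrix: the rational Calogero system in a harmonic well. -/
theorem trace_harmonic_oscillator_reduced (n : ℕ) (q p : Fin n → ℂ)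
    (hq : Function.Injective q) (g ω : ℂ) :
    Matrix.trace ((1 / 2 : ℂ) •
        (Matrix.of fun i j : Fin n =>
          if i = j then p i else Complex.I * g / (q i - q j)) ^ 2
      + (ω ^ 2 / 2) • (Matrix.diagonal q) ^ 2)
      = (∑ i, ((p i) ^ 2 / 2 + ω ^ 2 * (q i) ^ 2 / 2))
        + ∑ i, ∑ j, if i < j then g ^ 2 / (q i - q j) ^ 2 else 0 :=
  trace_harmonic_oscillator_reduced_general n q p g ω
end

section
/- Let n be a natural number, t, θ₀, θ₁, g ∈ ℂ, let q, p : Fin n → ℂ with p injective, let Λ = diag(p_1,…,p_n), and let Φ be the n×n complex matrix with Φ i i = q i and Φ i j = i·g/(p i − p j) for i ≠ j (i the imaginary unit). Then trace(Λ·Φ·(Λ − Φ − t·1) + θ₀·Λ − (θ₀+θ₁)·Φ) = Σ_i [q_i p_i² − p_i q_i² − t q_i p_i + θ₀ p_i − (θ₀+θ₁) q_i] − g² Σ_{i<j} (p_i + p_j)/(p_i − p_j)². -/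
/-!
Expanding the trace linearly, every term except `Tr(ΛΦΦ)` sees only the diagonal of `Φ`.
In `Tr(ΛΦΦ) = ∑ᵢⱼ pᵢ Φᵢⱼ Φⱼᵢ` each off-diagonal pair contributes
`Φᵢⱼ Φⱼᵢ = (I g)² / ((pᵢ - pⱼ)(pⱼ - pᵢ)) = g² / (pᵢ - pⱼ)²`, and grouping the terms `(i, j)` and
`(j, i)` for `i < j` yields the interaction `g² (pᵢ + pⱼ) / (pᵢ - pⱼ)²`.
-/

open Matrix Finset Complex

theorem Finset.sum_sum_eq_sum_diag_add_sum_lt {ι M : Type*} [Fintype ι] [LinearOrder ι]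
    [AddCommMonoid M] (f : ι → ι → M) :
    ∑ i, ∑ j, f i j = ∑ i, f i i + ∑ i, ∑ j, if i < j then f i j + f j i else 0 := by
  have hsplit (i j : ι) : f i j = (if i = j then f i j else 0)
      + ((if i < j then f i j else 0) + (if j < i then f i j else 0)) := by
    rcases lt_trichotomy i j with h | rfl | h
    · simp [h, h.ne, h.not_gt]
    · simp
    · simp [h, h.ne', h.not_gt]
  simp_rw [sum_congr rfl fun i _ => sum_congr rfl fun j _ => hsplit i j, sum_add_distrib,
    sum_ite_eq, mem_univ, if_true]
  rw [sum_comm (f := fun i j => if j < i then f i j else 0), ← sum_add_distrib]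
  simp_rw [← sum_add_distrib, ← ite_add_zero]

namespace Matrix

variable {ι R : Type*} [Fintype ι] [DecidableEq ι] [CommSemiring R]

theorem trace_diagonal_mul (d : ι → R) (A : Matrix ι ι R) :
    trace (diagonal d * A) = ∑ i, A i i * d i := by
  simp [trace, diagonal_mul, mul_comm]

theorem trace_diagonal_mul_mul (d : ι → R) (A B : Matrix ι ι R) :
    trace (diagonal d * A * B) = ∑ i, ∑ j, d i * A i j * B j i := by
  simp only [trace, diag_apply, mul_apply (M := diagonal d * A), diagonal_mul]

theorem trace_diagonal_mul_mul_diagonal (d : ι → R) (A : Matrix ι ι R) :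
    trace (diagonal d * A * diagonal d) = ∑ i, A i i * d i ^ 2 := by
  simp only [trace_diagonal_mul_mul, diagonal_apply, mul_ite, mul_zero, sum_ite_eq', mem_univ,
    if_true]
  exact sum_congr rfl fun i _ => by ring

end Matrix

/-- The dual coordinate `Φ`; the other one is `Λ = diagonal p`. -/
noncomputable def calogeroLaxMatrix {ι : Type*} [DecidableEq ι] (g : ℂ) (q p : ι → ℂ) :
    Matrix ι ι ℂ :=
  Matrix.of fun i j => if i = j then q i else I * g / (p i - p j)

section calogeroLaxMatrix

variable {ι : Type*} [DecidableEq ι] (g : ℂ) (q p : ι → ℂ)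

@[simp]
theorem calogeroLaxMatrix_apply_self (i : ι) : calogeroLaxMatrix g q p i i = q i := by
  simp [calogeroLaxMatrix]

theorem trace_calogeroLaxMatrix [Fintype ι] : trace (calogeroLaxMatrix g q p) = ∑ i, q i := by
  simp [trace]

theorem calogeroLaxMatrix_apply_mul_apply_swap {i j : ι} (hij : i ≠ j) :
    calogeroLaxMatrix g q p i j * calogeroLaxMatrix g q p j i = g ^ 2 / (p i - p j) ^ 2 := by
  simp only [calogeroLaxMatrix, of_apply, if_neg hij, if_neg hij.symm]
  rw [div_mul_div_comm, mul_mul_mul_comm, I_mul_I,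
    show (p i - p j) * (p j - p i) = -(p i - p j) ^ 2 by ring, neg_one_mul, ← sq, neg_div_neg_eq]

theorem trace_diagonal_mul_calogeroLaxMatrix_mul_self [Fintype ι] [LinearOrder ι] :
    trace (diagonal p * calogeroLaxMatrix g q p * calogeroLaxMatrix g q p)
      = ∑ i, p i * q i ^ 2
        + g ^ 2 * ∑ i, ∑ j, if i < j then (p i + p j) / (p i - p j) ^ 2 else 0 := by
  rw [trace_diagonal_mul_mul, sum_sum_eq_sum_diag_add_sum_lt, mul_sum]
  congr 1
  · simp [mul_assoc, sq]
  · refine sum_congr rfl fun i _ => ?_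
    rw [mul_sum]
    refine sum_congr rfl fun j _ => ?_
    split_ifs with hij
    · rw [mul_assoc, mul_assoc, calogeroLaxMatrix_apply_mul_apply_swap _ _ _ hij.ne,
        calogeroLaxMatrix_apply_mul_apply_swap _ _ _ hij.ne', ← neg_sub (p i), neg_sq]
      ring
    · rw [mul_zero]

end calogeroLaxMatrix

theorem dual_calogero_painleveIV_hamiltonian_general (n : ℕ) (t θ₀ θ₁ g : ℂ)
    (q p : Fin n → ℂ) :
    Matrix.trace
        (Matrix.diagonal p *
            (Matrix.of fun i j : Fin n =>
              if i = j then q i else Complex.I * g / (p i - p j)) *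
            (Matrix.diagonal p
              - (Matrix.of fun i j : Fin n =>
                  if i = j then q i else Complex.I * g / (p i - p j))
              - t • (1 : Matrix (Fin n) (Fin n) ℂ))
          + θ₀ • Matrix.diagonal p
          - (θ₀ + θ₁) • (Matrix.of fun i j : Fin n =>
              if i = j then q i else Complex.I * g / (p i - p j)))
      = (∑ i, (q i * (p i) ^ 2 - p i * (q i) ^ 2 - t * q i * p i
            + θ₀ * p i - (θ₀ + θ₁) * q i))
        - g ^ 2 * ∑ i, ∑ j, if i < j then (p i + p j) / (p i - p j) ^ 2 else 0 := by
  change trace (diagonal p * calogeroLaxMatrix g q p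
      * (diagonal p - calogeroLaxMatrix g q p - t • 1)
    + θ₀ • diagonal p - (θ₀ + θ₁) • calogeroLaxMatrix g q p) = _
  simp only [mul_sub, mul_smul_comm, mul_one, trace_add, trace_sub, trace_smul, smul_eq_mul]
  rw [trace_diagonal_mul_mul_diagonal, trace_diagonal_mul_calogeroLaxMatrix_mul_self,
    trace_diagonal_mul, trace_diagonal, trace_calogeroLaxMatrix]
  simp only [calogeroLaxMatrix_apply_self, sum_add_distrib, sum_sub_distrib, mul_sum, mul_assoc]
  ring

/-- Computation of the dual Calogero–Painlevé IV Hamiltonian: for `Λ = diag(p)` and `Φ`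
with diagonal entries `q i` and off-diagonal entries `I·g/(p i − p j)`,
`Tr(ΛΦ(Λ − Φ − t·1) + θ₀Λ − (θ₀+θ₁)Φ)` equals the multi-particle Hamiltonian
with interaction `− g² Σ_{i<j} (pᵢ+pⱼ)/(pᵢ−pⱼ)²`. -/
theorem dual_calogero_painleveIV_hamiltonian (n : ℕ) (t θ₀ θ₁ g : ℂ)
    (q p : Fin n → ℂ) (hp : Function.Injective p) :
    Matrix.trace
        (Matrix.diagonal p *
            (Matrix.of fun i j : Fin n =>
              if i = j then q i else Complex.I * g / (p i - p j)) *
            (Matrix.diagonal p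
              - (Matrix.of fun i j : Fin n =>
                  if i = j then q i else Complex.I * g / (p i - p j))
              - t • (1 : Matrix (Fin n) (Fin n) ℂ))
          + θ₀ • Matrix.diagonal p
          - (θ₀ + θ₁) • (Matrix.of fun i j : Fin n =>
              if i = j then q i else Complex.I * g / (p i - p j)))
      = (∑ i, (q i * (p i) ^ 2 - p i * (q i) ^ 2 - t * q i * p i
            + θ₀ * p i - (θ₀ + θ₁) * q i))
        - g ^ 2 * ∑ i, ∑ j, if i < j then (p i + p j) / (p i - p j) ^ 2 else 0 :=
  dual_calogero_painleveIV_hamiltonian_general n t θ₀ θ₁ g q p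
end
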